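/- arXiv:1904.04255 — 5 statements merged into one kernel-verified Lean document; each statement's English description precedes it below -/
import Mathlib

section
/- Let (E,C) be an adaptable separated graph. Then the monoid M(E,C) is a refinement monoid: whenever a+b = c+d in M(E,C), there exist w,x,y,z ∈ M(E,C) with a = w+x, b = y+z, c = w+y and d = x+z. -/
/-- A (finitely) separated graph `(E,C)`: a directed graph together with,
for each vertex `v`, a partition `C v` of `s⁻¹(v)` into pairwise disjoint
nonempty finite subsets. -/
structure SepGraph where
  V : Type
  Ed : Type
  s : Ed → V
  r : Ed → V
  C : V → Set (Finset Ed)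
  c_src : ∀ v : V, ∀ X ∈ C v, ∀ e ∈ X, s e = v
  c_nonempty : ∀ v : V, ∀ X ∈ C v, X.Nonempty
  c_disjoint : ∀ v : V, ∀ X ∈ C v, ∀ Y ∈ C v, X ≠ Y → Disjoint X Y
  c_cover : ∀ e : Ed, ∃ X ∈ C (s e), e ∈ X

namespace SepGraph

variable (G : SepGraph)

/-- There is an edge from `v` to `w`. -/
def Edge (v w : G.V) : Prop := ∃ e : G.Ed, G.s e = v ∧ G.r e = w

/-- There is a directed path from `v` to `w`. -/
def Reach : G.V → G.V → Prop := Relation.ReflTransGen G.Edge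

/-- Mutual reachability: `v` and `w` lie in the same component, i.e. `[v] = [w]`. -/
def VEquiv (v w : G.V) : Prop := G.Reach v w ∧ G.Reach w v

/-- `[v] ≤ [w]` in the antisymmetrization poset `I` of `E⁰`. -/
def VLe (v w : G.V) : Prop := G.Reach w v

/-- `[v] < [w]` in the antisymmetrization poset `I` of `E⁰`. -/
def VLt (v w : G.V) : Prop := G.Reach w v ∧ ¬ G.Reach v w

/-- The free commutative monoid `F` on the vertex set `E⁰`. -/
abbrev FreeM := G.V →₀ ℕ

/-- The basis element of `F` corresponding to a vertex. -/
noncomputable def vert (v : G.V) : G.FreeM := Finsupp.single v 1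

/-- `r(X) = Σ_{e ∈ X} r(e)` as an element of `F`. -/
noncomputable def rX (X : Finset G.Ed) : G.FreeM := ∑ e ∈ X, Finsupp.single (G.r e) 1

/-- The defining relations of `M(E,C)`: `a_v = Σ_{e ∈ X} a_{r(e)}` for `X ∈ C_v`. -/
def Rel : G.FreeM → G.FreeM → Prop := fun a b =>
  ∃ v : G.V, ∃ X ∈ G.C v, a = G.vert v ∧ b = G.rX X

/-- The congruence on `F` generated by the defining relations. -/
noncomputable def mCon : AddCon G.FreeM := addConGen G.Rel

/-- The monoid `M(E,C)` of the separated graph `(E,C)`. -/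
def M := G.mCon.Quotient

noncomputable instance : AddCommMonoid G.M := inferInstanceAs (AddCommMonoid G.mCon.Quotient)

/-- The generator `a_v` of `M(E,C)`. -/
noncomputable def gen (v : G.V) : G.M := G.mCon.mk' (G.vert v)

end SepGraph

/-- The data witnessing that a separated graph is *adaptable*: the
antisymmetrization `I` of `E⁰` is finite, it is partitioned into free and
regular elements (with free components reduced to a single vertex `v^p`),
and the conditions of Definition 1.6 of the paper hold.  Here, for
`p ∈ I_reg`, the subgraph `E_p` is the restriction of `E` to the class `p`. -/
structure SepGraph.AdaptableStructure (G : SepGraph) where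
  /-- the partition `I = I_free ⊔ I_reg` (a vertex is free if its class is free) -/
  free : G.V → Prop
  /-- `I` is a finite poset -/
  finite_components : Finite (Quot G.VEquiv)
  free_respects : ∀ v w : G.V, G.VEquiv v w → (free v ↔ free w)
  /-- a free component consists of a single vertex `E_p⁰ = {v^p}` -/
  free_singleton : ∀ v : G.V, free v → ∀ w : G.V, G.VEquiv w v → w = v
  /-- for free `p`, `s⁻¹(v^p) = ∅` iff `p` is minimal in `I` -/
  free_minimal : ∀ v : G.V, free v →
    ((¬ ∃ e : G.Ed, G.s e = v) ↔ ∀ w : G.V, G.Reach v w → G.VEquiv v w)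
  /-- for free non-minimal `p`, `C_{v^p} = {X₁,…,X_{k(p)}}` is a finite family -/
  free_C_finite : ∀ v : G.V, free v → (G.C v).Finite
  /-- each `X_i ∈ C_{v^p}` contains exactly one loop `α(p,i)` at `v^p` -/
  free_loop : ∀ v : G.V, free v → ∀ X ∈ G.C v, ∃! e : G.Ed, e ∈ X ∧ G.r e = v
  /-- the remaining edges `β(p,i,t)` of `X_i` end in strictly smaller components -/
  free_targets : ∀ v : G.V, free v → ∀ X ∈ G.C v, ∀ e ∈ X, G.r e = v ∨ G.VLt (G.r e) v
  /-- `g(p,i) ≥ 1`: there is at least one connector `β(p,i,1)` in each `X_i` -/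
  free_beta : ∀ v : G.V, free v → ∀ X ∈ G.C v, ∃ e ∈ X, G.r e ≠ v
  /-- for regular `p` and `w ∈ E_p⁰`, `|C_w| = 1` -/
  reg_unique_C : ∀ w : G.V, ¬ free w → ∃! X : Finset G.Ed, X ∈ G.C w
  /-- for regular `p` and `w ∈ E_p⁰`, `|s_{E_p}⁻¹(w)| ≥ 2` -/
  reg_two_edges : ∀ w : G.V, ¬ free w → ∃ e₁ e₂ : G.Ed, e₁ ≠ e₂ ∧ G.s e₁ = w ∧ G.s e₂ = w ∧
    G.VEquiv (G.r e₁) w ∧ G.VEquiv (G.r e₂) w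
  /-- every edge leaving `w ∈ E_p⁰` stays in `E_p` or goes to some `E_q⁰` with `q < p` -/
  reg_targets : ∀ w : G.V, ¬ free w → ∀ e : G.Ed, G.s e = w →
    G.VEquiv (G.r e) w ∨ G.VLt (G.r e) w

/-- The algebraic pre-order on a commutative monoid: `x ≤ y` iff `x + z = y` for some `z`. -/
def MLe {M : Type} [AddCommMonoid M] (x y : M) : Prop := ∃ z, x + z = y

/-- A commutative monoid is conical if `x + y = 0` implies `x = y = 0`. -/
def IsConical (M : Type) [AddCommMonoid M] : Prop := ∀ x y : M, x + y = 0 → x = 0 ∧ y = 0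

/-- The refinement property for a commutative monoid. -/
def IsRefinement (M : Type) [AddCommMonoid M] : Prop := ∀ a b c d : M, a + b = c + d →
  ∃ w x y z : M, a = w + x ∧ b = y + z ∧ c = w + y ∧ d = x + z

/-- `p` is a prime element: it is not invertible, and `p ≤ a + b` implies `p ≤ a` or `p ≤ b`. -/
def IsPrimeElem {M : Type} [AddCommMonoid M] (p : M) : Prop :=
  (¬ ∃ q, p + q = 0) ∧ ∀ a b : M, MLe p (a + b) → MLe p a ∨ MLe p b

/-- A commutative monoid is primely generated if every non-invertible element is a
sum of prime elements. -/
def IsPrimelyGenerated (M : Type) [AddCommMonoid M] : Prop :=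
  ∀ x : M, (¬ ∃ q, x + q = 0) → ∃ l : Multiset M, (∀ p ∈ l, IsPrimeElem p) ∧ x = l.sum

/-! Each relation `a_v = r(X)` is read as a rewriting rule `a_v ↦ r(X)` on the free monoid.
Two rules applied at the same vertex `v` are joinable: for regular `v` there is only one rule,
and for free `v` every `X ∈ C_v` contains a loop at `v`, so `r(X) = a_v + β_X` and
`r(Y) = a_v + β_Y` both rewrite in one step to `a_v + β_X + β_Y`. So the rewriting system is
confluent and `M(E,C)` is the free monoid modulo joinability. Since a rewriting sequence starting
at a sum splits into sequences starting at the summands, refinement in `M(E,C)` follows from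
refinement in the free monoid `E⁰ →₀ ℕ`. -/

namespace Finsupp

variable {α : Type}

theorem single_one_le_add_iff {a b : α →₀ ℕ} {v : α} :
    single v 1 ≤ a + b ↔ single v 1 ≤ a ∨ single v 1 ≤ b := by
  simp only [single_le_iff, add_apply]
  omega

theorem exists_of_add_single_eq_add {z a b : α →₀ ℕ} {v : α} (h : z + single v 1 = a + b) :
    (∃ a', a = a' + single v 1 ∧ z = a' + b) ∨ (∃ b', b = b' + single v 1 ∧ z = a + b') := by
  have hle : single v 1 ≤ a + b := h ▸ le_add_self
  rcases single_one_le_add_iff.mp hle with ha | hb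
  · obtain ⟨a', rfl⟩ := le_iff_exists_add'.mp ha
    exact Or.inl ⟨a', rfl, add_right_cancel (h.trans (add_right_comm _ _ _))⟩
  · obtain ⟨b', rfl⟩ := le_iff_exists_add'.mp hb
    exact Or.inr ⟨b', rfl, add_right_cancel (h.trans (add_assoc _ _ _).symm)⟩

theorem eq_and_eq_zero_of_single_one_eq_add {a : α →₀ ℕ} {v v' : α}
    (h : single v' 1 = a + single v 1) : v = v' ∧ a = 0 := by
  have hv : v = v' := by
    by_contra hne
    simpa [single_apply, Ne.symm hne] using DFunLike.congr_fun h v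
  subst hv
  exact ⟨rfl, add_eq_right.mp h.symm⟩

theorem isRefinement : IsRefinement (α →₀ ℕ) := by
  intro a b c d h
  refine ⟨a ⊓ c, a - c, c - a, b - (c - a), ?_, ?_, ?_, ?_⟩ <;>
  · ext v
    have := DFunLike.congr_fun h v
    simp only [add_apply, tsub_apply, inf_apply] at this ⊢
    omega

end Finsupp

namespace SepGraph

variable {G : SepGraph}

def LoopsAtSplits (G : SepGraph) : Prop :=
  ∀ v, ∀ X ∈ G.C v, ∀ Y ∈ G.C v, X ≠ Y → ∃ e ∈ X, G.r e = v

theorem AdaptableStructure.loopsAtSplits (A : G.AdaptableStructure) : G.LoopsAtSplits := by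
  intro v X hX Y hY hXY
  by_cases hv : A.free v
  · obtain ⟨e, ⟨heX, her⟩, -⟩ := A.free_loop v hv X hX
    exact ⟨e, heX, her⟩
  · obtain ⟨X₀, -, hX₀⟩ := A.reg_unique_C v hv
    exact absurd ((hX₀ X hX).trans (hX₀ Y hY).symm) hXY

theorem rX_eq_vert_add_of_loop {X : Finset G.Ed} {e : G.Ed} (he : e ∈ X) :
    ∃ β, G.rX X = G.vert (G.r e) + β := by
  classical
  exact ⟨G.rX (X.erase e), (Finset.add_sum_erase X _ he).symm⟩

def Step (G : SepGraph) (x y : G.FreeM) : Prop :=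
  ∃ z v, ∃ X ∈ G.C v, x = z + G.vert v ∧ y = z + G.rX X

theorem exists_of_add_vert_eq_add {z a b : G.FreeM} {v : G.V} (h : z + G.vert v = a + b) :
    (∃ a', a = a' + G.vert v ∧ z = a' + b) ∨ (∃ b', b = b' + G.vert v ∧ z = a + b') :=
  Finsupp.exists_of_add_single_eq_add h

theorem Step.add_right {x y : G.FreeM} (h : G.Step x y) (t : G.FreeM) :
    G.Step (x + t) (y + t) := by
  obtain ⟨z, v, X, hX, rfl, rfl⟩ := h
  exact ⟨z + t, v, X, hX, add_right_comm _ _ _, add_right_comm _ _ _⟩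

theorem reflTransGen_step_add {x x' y y' : G.FreeM} (hx : Relation.ReflTransGen G.Step x x')
    (hy : Relation.ReflTransGen G.Step y y') : Relation.ReflTransGen G.Step (x + y) (x' + y') := by
  have hx' := hx.lift (· + y) fun _ _ h ↦ h.add_right y
  have hy' := hy.lift (x' + ·) fun _ _ h ↦ by simpa only [add_comm x'] using h.add_right x'
  exact hx'.trans hy'

theorem Step.of_add {a b e : G.FreeM} (h : G.Step (a + b) e) :
    (∃ a', G.Step a a' ∧ e = a' + b) ∨ (∃ b', G.Step b b' ∧ e = a + b') := by
  obtain ⟨z, v, X, hX, hz, rfl⟩ := h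
  rcases exists_of_add_vert_eq_add hz.symm with ⟨a', rfl, rfl⟩ | ⟨b', rfl, rfl⟩
  · exact Or.inl ⟨a' + G.rX X, ⟨a', v, X, hX, rfl, rfl⟩, add_right_comm _ _ _⟩
  · exact Or.inr ⟨b' + G.rX X, ⟨b', v, X, hX, rfl, rfl⟩, add_assoc _ _ _⟩

theorem exists_add_of_reflTransGen_step_add {a b e : G.FreeM}
    (h : Relation.ReflTransGen G.Step (a + b) e) :
    ∃ a' b', e = a' + b' ∧ Relation.ReflTransGen G.Step a a' ∧
      Relation.ReflTransGen G.Step b b' := by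
  induction h with
  | refl => exact ⟨a, b, rfl, .refl, .refl⟩
  | tail _ hs ih =>
    obtain ⟨a', b', rfl, ha, hb⟩ := ih
    rcases hs.of_add with ⟨a'', hs', rfl⟩ | ⟨b'', hs', rfl⟩
    · exact ⟨a'', b', rfl, ha.tail hs', hb⟩
    · exact ⟨a', b'', rfl, ha, hb.tail hs'⟩

theorem step_diamond (hG : G.LoopsAtSplits) (a b c : G.FreeM) (hb : G.Step a b)
    (hc : G.Step a c) : ∃ d, Relation.ReflGen G.Step b d ∧ Relation.ReflTransGen G.Step c d := by
  obtain ⟨z, v, X, hX, rfl, rfl⟩ := hb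
  obtain ⟨z', v', Y, hY, ha, rfl⟩ := hc
  rcases exists_of_add_vert_eq_add ha with ⟨w, rfl, rfl⟩ | ⟨b', hb', rfl⟩
  · -- two different occurrences are rewritten
    exact ⟨w + G.rX X + G.rX Y, .single ⟨w + G.rX X, v', Y, hY, by abel, by abel⟩,
      .single ⟨w + G.rX Y, v, X, hX, by abel, by abel⟩⟩
  · -- the same occurrence is rewritten
    obtain ⟨rfl, rfl⟩ := Finsupp.eq_and_eq_zero_of_single_one_eq_add hb'
    rw [add_zero]
    by_cases hXY : X = Y
    · exact ⟨z' + G.rX X, .refl, hXY ▸ .refl⟩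
    obtain ⟨x, hx, hxv⟩ := hG v X hX Y hY hXY
    obtain ⟨y, hy, hyv⟩ := hG v Y hY X hX (Ne.symm hXY)
    obtain ⟨βX, hβX⟩ := rX_eq_vert_add_of_loop hx
    obtain ⟨βY, hβY⟩ := rX_eq_vert_add_of_loop hy
    rw [hxv] at hβX
    rw [hyv] at hβY
    refine ⟨z' + βX + βY + G.vert v, .single ⟨z' + βX, v, Y, hY, ?_, ?_⟩,
      .single ⟨z' + βY, v, X, hX, ?_, ?_⟩⟩ <;>
    · simp only [hβX, hβY]; abel

def joinCon (hG : G.LoopsAtSplits) : AddCon G.FreeM where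
  r := Relation.Join (Relation.ReflTransGen G.Step)
  iseqv := Relation.equivalence_join_reflTransGen (step_diamond hG)
  add' := fun ⟨u, hau, hbu⟩ ⟨w, hcw, hdw⟩ ↦
    ⟨u + w, reflTransGen_step_add hau hcw, reflTransGen_step_add hbu hdw⟩

theorem mCon_le_joinCon (hG : G.LoopsAtSplits) : G.mCon ≤ joinCon hG := by
  refine AddCon.addConGen_le.mpr ?_
  rintro _ _ ⟨v, X, hX, rfl, rfl⟩
  exact ⟨G.rX X, .single ⟨0, v, X, hX, (zero_add _).symm, (zero_add _).symm⟩, .refl⟩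

theorem mk'_eq_of_reflTransGen_step {x y : G.FreeM} (h : Relation.ReflTransGen G.Step x y) :
    G.mCon.mk' x = G.mCon.mk' y := by
  refine G.mCon.eq.mpr ?_
  induction h with
  | refl => exact G.mCon.refl _
  | tail _ hs ih =>
    obtain ⟨z, v, X, hX, rfl, rfl⟩ := hs
    exact G.mCon.trans ih (G.mCon.add (G.mCon.refl z) (AddConGen.Rel.of _ _ ⟨v, X, hX, rfl, rfl⟩))

theorem isRefinement_M (hG : G.LoopsAtSplits) : IsRefinement G.M := by
  intro a b c d h
  obtain ⟨a, rfl⟩ := G.mCon.mk'_surjective a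
  obtain ⟨b, rfl⟩ := G.mCon.mk'_surjective b
  obtain ⟨c, rfl⟩ := G.mCon.mk'_surjective c
  obtain ⟨d, rfl⟩ := G.mCon.mk'_surjective d
  have hcon : G.mCon (a + b) (c + d) := G.mCon.eq.mp h
  obtain ⟨e, hab, hcd⟩ := mCon_le_joinCon hG hcon
  obtain ⟨a', b', rfl, ha, hb⟩ := exists_add_of_reflTransGen_step_add hab
  obtain ⟨c', d', he, hc, hd⟩ := exists_add_of_reflTransGen_step_add hcd
  obtain ⟨w, x, y, z, rfl, rfl, rfl, rfl⟩ := Finsupp.isRefinement a' b' c' d' he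
  exact ⟨G.mCon.mk' w, G.mCon.mk' x, G.mCon.mk' y, G.mCon.mk' z,
    mk'_eq_of_reflTransGen_step ha, mk'_eq_of_reflTransGen_step hb,
    mk'_eq_of_reflTransGen_step hc, mk'_eq_of_reflTransGen_step hd⟩

end SepGraph

/-- If `(E,C)` is an adaptable separated graph, then `M(E,C)` is a
refinement monoid. -/
theorem stmt2 (G : SepGraph) (A : G.AdaptableStructure) (a b c d : G.M)
    (h : a + b = c + d) :
    ∃ w x y z : G.M, a = w + x ∧ b = y + z ∧ c = w + y ∧ d = x + z :=
  SepGraph.isRefinement_M A.loopsAtSplits a b c d h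
end

section
/- Let (E,C) be an adaptable separated graph. Then for every vertex v ∈ E⁰, the generator a_v is a prime element of M(E,C): a_v is not invertible, and whenever a_v ≤ x + y in the algebraic pre-order of M(E,C), then a_v ≤ x or a_v ≤ y. -/
/-! The generator `a_v` lies below the class of `a ∈ F` exactly when some vertex in the support
of `a` reaches `v`. This condition is compatible with the relation `a_w = Σ_{e ∈ X} a_{r(e)}`
as soon as every block `X ∈ C_w` contains an edge leading back into the component of `w`,
which is the case in an adaptable graph (through the loop `α` at a free vertex, and through
the edges of the transitive graph `E_p` at a regular one). Hence `a_v ≤ x + y` splits as a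
disjunction over the two supports, and `a_v` cannot be invertible because `0` has empty
support. -/

theorem MLe.trans {N : Type} [AddCommMonoid N] {a b c : N} (hab : MLe a b) (hbc : MLe b c) :
    MLe a c := by
  obtain ⟨z, rfl⟩ := hab
  obtain ⟨z', rfl⟩ := hbc
  exact ⟨z + z', (add_assoc _ _ _).symm⟩

namespace SepGraph

variable (G : SepGraph)

def SupportReaches (v : G.V) (a : G.FreeM) : Prop := ∃ w : G.V, a w ≠ 0 ∧ G.Reach w v

noncomputable def mkM : G.FreeM →+ G.M := G.mCon.mk'

theorem mkM_surjective : Function.Surjective G.mkM := G.mCon.mk'_surjective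

theorem mkM_eq_mkM_iff {a b : G.FreeM} : G.mkM a = G.mkM b ↔ G.mCon a b := G.mCon.eq

theorem gen_eq_mkM (v : G.V) : G.gen v = G.mkM (G.vert v) := rfl

def ReturnsThroughEveryBlock : Prop := ∀ w : G.V, ∀ X ∈ G.C w, ∃ e ∈ X, G.Reach (G.r e) w

variable {G}

theorem supportReaches_add {v : G.V} {a b : G.FreeM} :
    G.SupportReaches v (a + b) ↔ G.SupportReaches v a ∨ G.SupportReaches v b := by
  simp only [SupportReaches, Finsupp.add_apply, ne_eq, Nat.add_eq_zero_iff, not_and_or,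
    or_and_right, exists_or]

theorem not_supportReaches_zero (v : G.V) : ¬ G.SupportReaches v 0 := by
  rintro ⟨w, hw, -⟩
  exact hw rfl

theorem supportReaches_vert {v w : G.V} : G.SupportReaches v (G.vert w) ↔ G.Reach w v := by
  classical
  simp [SupportReaches, vert, Finsupp.single_apply]

theorem supportReaches_rX {v : G.V} {X : Finset G.Ed} :
    G.SupportReaches v (G.rX X) ↔ ∃ e ∈ X, G.Reach (G.r e) v := by
  classical
  induction X using Finset.induction_on with
  | empty => simpa [rX] using not_supportReaches_zero v
  | insert e X he ih =>
    rw [rX, Finset.sum_insert he, supportReaches_add, ← rX, ih, ← vert, supportReaches_vert,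
      Finset.exists_mem_insert]

variable (G) in
def supportReachesCon (v : G.V) : AddCon G.FreeM where
  r a b := G.SupportReaches v a ↔ G.SupportReaches v b
  iseqv := ⟨fun _ => Iff.rfl, Iff.symm, Iff.trans⟩
  add' h₁ h₂ := by simp only [supportReaches_add, h₁, h₂]

theorem mCon_le_supportReachesCon (hG : G.ReturnsThroughEveryBlock) (v : G.V) :
    G.mCon ≤ G.supportReachesCon v := by
  refine AddCon.addConGen_le.2 ?_
  rintro _ _ ⟨w, X, hX, rfl, rfl⟩
  show G.SupportReaches v (G.vert w) ↔ G.SupportReaches v (G.rX X)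
  rw [supportReaches_vert, supportReaches_rX]
  constructor
  · intro hwv
    obtain ⟨e, heX, hew⟩ := hG w X hX
    exact ⟨e, heX, hew.trans hwv⟩
  · rintro ⟨e, heX, hev⟩
    exact (Relation.ReflTransGen.single ⟨e, G.c_src w X hX e heX, rfl⟩).trans hev

theorem gen_le_gen_of_edge {w u : G.V} (h : G.Edge w u) : MLe (G.gen u) (G.gen w) := by
  classical
  obtain ⟨e, rfl, rfl⟩ := h
  obtain ⟨X, hX, heX⟩ := G.c_cover e
  have hsplit : G.rX X = G.vert (G.r e) + ∑ f ∈ X.erase e, Finsupp.single (G.r f) 1 :=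
    (Finset.add_sum_erase _ _ heX).symm
  refine ⟨G.mkM (∑ f ∈ X.erase e, Finsupp.single (G.r f) 1), ?_⟩
  rw [gen_eq_mkM, gen_eq_mkM, ← map_add, ← hsplit]
  exact G.mkM_eq_mkM_iff.2 (AddConGen.Rel.symm (AddConGen.Rel.of _ _ ⟨G.s e, X, hX, rfl, rfl⟩))

theorem gen_le_gen_of_reach {w v : G.V} (h : G.Reach w v) : MLe (G.gen v) (G.gen w) := by
  induction h with
  | refl => exact ⟨0, add_zero _⟩
  | tail _ hedge ih => exact (gen_le_gen_of_edge hedge).trans ih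

theorem gen_le_mkM_of_apply_ne_zero {w : G.V} {a : G.FreeM} (hw : a w ≠ 0) :
    MLe (G.gen w) (G.mkM a) := by
  classical
  refine ⟨G.mkM (a - G.vert w), ?_⟩
  rw [gen_eq_mkM, ← map_add, add_tsub_cancel_of_le]
  intro u
  rcases eq_or_ne u w with rfl | hne
  · simpa [vert] using Nat.one_le_iff_ne_zero.2 hw
  · simp [vert, hne.symm]

theorem gen_le_mkM_iff (hG : G.ReturnsThroughEveryBlock) {v : G.V} {a : G.FreeM} :
    MLe (G.gen v) (G.mkM a) ↔ G.SupportReaches v a := by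
  constructor
  · rintro ⟨z, hz⟩
    obtain ⟨b, rfl⟩ := G.mkM_surjective z
    have hrel : G.mCon (G.vert v + b) a := G.mkM_eq_mkM_iff.1 ((map_add _ _ _).trans hz)
    refine (mCon_le_supportReachesCon hG v hrel).1 (supportReaches_add.2 (Or.inl ?_))
    exact supportReaches_vert.2 Relation.ReflTransGen.refl
  · rintro ⟨w, hw, hwv⟩
    exact (gen_le_gen_of_reach hwv).trans (gen_le_mkM_of_apply_ne_zero hw)

theorem isPrimeElem_gen (hG : G.ReturnsThroughEveryBlock) (v : G.V) : IsPrimeElem (G.gen v) := by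
  refine ⟨fun ⟨q, hq⟩ => not_supportReaches_zero v ((gen_le_mkM_iff hG).1 ⟨q, ?_⟩), ?_⟩
  · rw [hq, map_zero]
  · intro x y hxy
    obtain ⟨a, rfl⟩ := G.mkM_surjective x
    obtain ⟨b, rfl⟩ := G.mkM_surjective y
    rw [← map_add, gen_le_mkM_iff hG, supportReaches_add] at hxy
    simpa only [gen_le_mkM_iff hG] using hxy

theorem AdaptableStructure.returnsThroughEveryBlock (A : G.AdaptableStructure) :
    G.ReturnsThroughEveryBlock := by
  intro w X hX
  by_cases hw : A.free w
  · obtain ⟨e, ⟨heX, hew⟩, -⟩ := A.free_loop w hw X hX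
    exact ⟨e, heX, hew ▸ Relation.ReflTransGen.refl⟩
  · obtain ⟨X₀, -, hC⟩ := A.reg_unique_C w hw
    obtain ⟨e, -, -, rfl, -, hew, -⟩ := A.reg_two_edges w hw
    obtain ⟨Y, hY, heY⟩ := G.c_cover e
    have hYX : Y = X := (hC Y hY).trans (hC X hX).symm
    exact ⟨e, hYX ▸ heY, hew.1⟩

end SepGraph

/-- If `(E,C)` is an adaptable separated graph, then every generator
`a_v` (`v ∈ E⁰`) is a prime element of `M(E,C)`. -/
theorem stmt5 (G : SepGraph) (A : G.AdaptableStructure) (v : G.V) :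
    IsPrimeElem (G.gen v) :=
  G.isPrimeElem_gen A.returnsThroughEveryBlock v
end

section
/- Let M be a commutative monoid, H an abelian group, and φ : M → H a surjective monoid homomorphism. Let ι : M → G(M) be the canonical map of M into its Grothendieck group and let G(φ) : G(M) → H be the unique group homomorphism with G(φ) ∘ ι = φ. If G(M) is a finitely generated abelian group, then the kernel of G(φ) is generated as a group by finitely many strictly positive elements, i.e., there exist x₁,…,x_k ∈ M with ι(x₁),…,ι(x_k) ∈ ker G(φ) generating ker G(φ) as a group. -/
/-!
The universal property forces `G` to be generated by `ι(M)`, so every element of `G` is a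
difference `ι a - ι b`, and `ker ψ` is finitely generated because `ℤ` is noetherian. A kernel
element `ι a - ι b` is rewritten as `ι (a + c) - ι (b + c)` with `φ c = -φ b`, which surjectivity
of `φ` provides; then both terms lie in the kernel.
-/

namespace AddMonoidHom

variable {M G H : Type*} [AddCommMonoid M] [AddCommGroup G] [AddCommGroup H]

theorem closure_range_eq_top_of_lift_unique (ι : M →+ G)
    (h : ∀ f g : G →+ G ⧸ AddSubgroup.closure (Set.range ι), f.comp ι = g.comp ι → f = g) :
    AddSubgroup.closure (Set.range ι) = ⊤ := by
  have hmk : QuotientAddGroup.mk' (AddSubgroup.closure (Set.range ι)) = 0 := by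
    refine h _ _ (ext fun m => ?_)
    simpa using AddSubgroup.subset_closure (Set.mem_range_self m)
  rw [← QuotientAddGroup.ker_mk' (AddSubgroup.closure (Set.range ι)), hmk, ker_zero]

theorem exists_sub_eq_of_closure_range_eq_top (ι : M →+ G)
    (h : AddSubgroup.closure (Set.range ι) = ⊤) (g : G) : ∃ a b, ι a - ι b = g := by
  have hg : g ∈ AddSubgroup.closure (Set.range ι) := h ▸ AddSubgroup.mem_top g
  induction hg using AddSubgroup.closure_induction with
  | mem _ hx =>
    obtain ⟨a, rfl⟩ := hx
    exact ⟨a, 0, by simp⟩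
  | zero => exact ⟨0, 0, by simp⟩
  | add _ _ _ _ hx hy =>
    obtain ⟨a, b, rfl⟩ := hx
    obtain ⟨c, d, rfl⟩ := hy
    exact ⟨a + c, b + d, by simp only [map_add]; abel⟩
  | neg _ _ hx =>
    obtain ⟨a, b, rfl⟩ := hx
    exact ⟨b, a, by abel⟩

theorem exists_sub_eq_of_mem_ker (ι : M →+ G) (ψ : G →+ H)
    (hsurj : Function.Surjective (ψ.comp ι)) (hdiff : ∀ g, ∃ a b, ι a - ι b = g)
    {g : G} (hg : g ∈ ψ.ker) :
    ∃ a, ψ (ι a) = 0 ∧ ∃ b, ψ (ι b) = 0 ∧ ι a - ι b = g := by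
  obtain ⟨a, b, rfl⟩ := hdiff g
  obtain ⟨c, hc⟩ := hsurj (-ψ (ι b))
  rw [comp_apply] at hc
  have hab : ψ (ι a) = ψ (ι b) := sub_eq_zero.mp (by simpa using hg)
  refine ⟨a + c, ?_, b + c, ?_, ?_⟩
  · simp [hab, hc]
  · simp [hc]
  · simp only [map_add]; abel

end AddMonoidHom

theorem AddSubgroup.fg_of_addGroup_fg {G : Type*} [AddCommGroup G] (hG : AddGroup.FG G)
    (K : AddSubgroup G) : K.FG := by
  have : Module.Finite ℤ G := Module.Finite.iff_addGroup_fg.mpr hG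
  exact (Submodule.fg_iff_addSubgroup_fg _).mp (IsNoetherian.noetherian K.toIntSubmodule)

theorem AddSubgroup.exists_fin_closure_eq_of_fg {M G : Type*} [AddCommMonoid M] [AddCommGroup G]
    (ι : M →+ G) {K : AddSubgroup G} (hK : K.FG) (P : Set M) (hP : ∀ m ∈ P, ι m ∈ K)
    (hsub : ∀ g ∈ K, ∃ a ∈ P, ∃ b ∈ P, ι a - ι b = g) :
    ∃ (k : ℕ) (x : Fin k → M), (∀ i, x i ∈ P) ∧
      AddSubgroup.closure (Set.range fun i => ι (x i)) = K := by
  obtain ⟨T, rfl⟩ := hK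
  choose a ha b hb hab using fun t : (T : Set G) => hsub t (subset_closure t.2)
  have hfin : (Set.range a ∪ Set.range b).Finite :=
    (Set.finite_range a).union (Set.finite_range b)
  obtain ⟨k, x, hx⟩ := hfin.fin_embedding
  have hxP : ∀ i, x i ∈ P := by
    intro i
    obtain ⟨t, ht⟩ | ⟨t, ht⟩ := hx.symm ▸ Set.mem_range_self (f := x) i
    · exact ht ▸ ha t
    · exact ht ▸ hb t
  refine ⟨k, x, hxP, le_antisymm ?_ ?_⟩
  · rw [closure_le]
    rintro _ ⟨i, rfl⟩
    exact hP _ (hxP i)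
  · rw [closure_le]
    intro t ht
    have hmem : ∀ m ∈ Set.range a ∪ Set.range b,
        ι m ∈ AddSubgroup.closure (Set.range fun i => ι (x i)) := by
      intro m hm
      obtain ⟨i, rfl⟩ := hx.symm ▸ hm
      exact subset_closure ⟨i, rfl⟩
    rw [SetLike.mem_coe, ← show ι (a ⟨t, ht⟩) - ι (b ⟨t, ht⟩) = t from hab ⟨t, ht⟩]
    exact sub_mem (hmem _ (.inl ⟨_, rfl⟩)) (hmem _ (.inr ⟨_, rfl⟩))

/-- (Proposition 2.11) Let `M` be a commutative monoid, `ι : M → G`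
its Grothendieck group, `φ : M → H` a surjective monoid homomorphism onto an abelian
group and `ψ = G(φ) : G → H` the induced group homomorphism.  If `G` is a finitely
generated abelian group, then `ker ψ` is generated, as a group, by finitely many
strictly positive elements. -/
theorem stmt8 (M G H : Type) [AddCommMonoid M] [AddCommGroup G] [AddCommGroup H]
    (ι : M →+ G)
    (huniv : ∀ (K : Type) [AddCommGroup K] (f : M →+ K),
      ∃! g : G →+ K, ∀ m : M, g (ι m) = f m)
    (hfg : AddGroup.FG G)
    (φ : M →+ H) (hφ : Function.Surjective φ)
    (ψ : G →+ H) (hψ : ∀ m : M, ψ (ι m) = φ m) :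
    ∃ (k : ℕ) (x : Fin k → M), (∀ i : Fin k, ψ (ι (x i)) = 0) ∧
      AddSubgroup.closure (Set.range fun i => ι (x i)) = ψ.ker := by
  have hgen : AddSubgroup.closure (Set.range ι) = ⊤ :=
    ι.closure_range_eq_top_of_lift_unique fun f g hfg =>
      (huniv _ (f.comp ι)).unique (fun _ => rfl) (fun m => (DFunLike.congr_fun hfg m).symm)
  have hsurj : Function.Surjective (ψ.comp ι) := by
    rwa [show ψ.comp ι = φ from AddMonoidHom.ext hψ]
  exact AddSubgroup.exists_fin_closure_eq_of_fg ι (AddSubgroup.fg_of_addGroup_fg hfg ψ.ker)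
    {m | ψ (ι m) = 0} (fun _ hm => hm) fun _ hg =>
      ι.exists_sub_eq_of_mem_ker ψ hsurj (ι.exists_sub_eq_of_closure_range_eq_top hgen) hg
end

section
/- Let I be a finite poset with a partition I = I_free ⊔ I_reg, define the relation ◁ on I by p ◁ q iff p < q or p = q ∈ I_reg, and let M(I,◁) be the commutative monoid with generating set I and relations q = q + p whenever p ◁ q. Then M(I,◁) is an antisymmetric finitely generated refinement monoid, its set of prime elements is exactly the set of images of elements of I, and an element p ∈ I is a regular prime (2p ≤ p) iff p ∈ I_reg and a free prime (np ≤ mp implies n ≤ m) iff p ∈ I_free. -/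
/-- The congruence defining the monoid `M(I,◁)` for a poset `I` with a partition
`I = I_free ⊔ I_reg`: generating set `I` and relations `q = q + p` whenever `p ◁ q`,
where `p ◁ q` iff `p < q` or `p = q ∈ I_reg`. -/
noncomputable def triCon (I : Type) [PartialOrder I] (free : I → Prop) : AddCon (I →₀ ℕ) :=
  addConGen fun a b => ∃ p q : I, (p < q ∨ (p = q ∧ ¬ free p)) ∧
    a = Finsupp.single q 1 ∧ b = Finsupp.single q 1 + Finsupp.single p 1

/-- The monoid `M(I,◁)`. -/
def MIdx (I : Type) [PartialOrder I] (free : I → Prop) : Type := (triCon I free).Quotient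

noncomputable instance (I : Type) [PartialOrder I] (free : I → Prop) :
    AddCommMonoid (MIdx I free) := inferInstanceAs (AddCommMonoid (triCon I free).Quotient)

/-- The image in `M(I,◁)` of the generator corresponding to `p ∈ I`. -/
noncomputable def genI (I : Type) [PartialOrder I] (free : I → Prop) (p : I) :
    MIdx I free := (triCon I free).mk' (Finsupp.single p 1)

/-!
Send `x : I →₀ ℕ` to `mult x : I → ℕ∞`, whose value at `p` is `⊤` if `x` has a nonzero coefficient
at some `q` with `p ◁ q`, and `x p` otherwise. As `◁` is transitive, `mult` is additive and
identifies the two sides of each defining relation. Conversely, if `mult x = mult y`, then every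
`p` at which `x` exceeds `x ⊓ y` satisfies `p ◁ q` for some `q` maximal in the support of `x`, and
such a `q` lies in the support of `y` as well; so the relations absorb the excess, and
`x ≡ x ⊓ y ≡ y`. Hence
`M(I,◁)` embeds into `(ℕ∞)^I`, and its algebraic preorder is the pointwise order (with `w - u` as a
complement of representatives). So `p ≤ a` iff the `p`-th coordinate of `a` is nonzero, which makes
every generator prime and every prime equal to a generator below it, and the `p`-th coordinate of
`n • p` is `n` when `p` is free and `⊤` otherwise. Refinement is built coordinatewise.
-/

theorem IsPrimeElem.mle_of_mle_nsmul {M : Type} [AddCommMonoid M] {x y : M} (hx : IsPrimeElem x) :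
    ∀ {n : ℕ}, MLe x (n • y) → MLe x y
  | 0, h => (hx.1 (by rwa [zero_nsmul] at h)).elim
  | n + 1, h => (hx.2 _ _ (succ_nsmul y n ▸ h)).elim hx.mle_of_mle_nsmul id

theorem IsPrimeElem.exists_mle_of_mle_sum {M ι : Type} [AddCommMonoid M] {x : M}
    (hx : IsPrimeElem x) {s : Finset ι} {f : ι → M} (h : MLe x (∑ i ∈ s, f i)) :
    ∃ i ∈ s, MLe x (f i) := by
  classical
  induction s using Finset.induction_on with
  | empty => exact (hx.1 (by rwa [Finset.sum_empty] at h)).elim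
  | insert i s hi ih =>
    rw [Finset.sum_insert hi] at h
    rcases hx.2 _ _ h with h | h
    · exact ⟨i, Finset.mem_insert_self i s, h⟩
    · obtain ⟨j, hj, h⟩ := ih h
      exact ⟨j, Finset.mem_insert_of_mem hj, h⟩

namespace MIdx

variable {I : Type} [PartialOrder I] {free : I → Prop}

variable (free) in
/-- The relation `p ◁ q`. -/
def Lhd (p q : I) : Prop := p < q ∨ (p = q ∧ ¬ free p)

theorem Lhd.le {p q : I} (h : Lhd free p q) : p ≤ q := by
  rcases h with h | ⟨rfl, -⟩
  exacts [h.le, le_rfl]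

theorem Lhd.trans_le {p q r : I} (h : Lhd free p q) (hqr : q ≤ r) : Lhd free p r := by
  rcases hqr.lt_or_eq with hqr | rfl
  exacts [Or.inl (h.le.trans_lt hqr), h]

theorem Lhd.trans {p q r : I} (h : Lhd free p q) (h' : Lhd free q r) : Lhd free p r :=
  h.trans_le h'.le

variable (free) in
def Absorbs (x : I →₀ ℕ) (p : I) : Prop := ∃ q, x q ≠ 0 ∧ Lhd free p q

theorem absorbs_add {x y : I →₀ ℕ} {p : I} :
    Absorbs free (x + y) p ↔ Absorbs free x p ∨ Absorbs free y p := by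
  simp only [Absorbs, Finsupp.add_apply, ne_eq, Nat.add_eq_zero_iff, not_and_or, or_and_right,
    exists_or]

theorem Absorbs.trans {x e : I →₀ ℕ} {p : I} (he : Absorbs free e p)
    (hx : ∀ q, e q ≠ 0 → Absorbs free x q) : Absorbs free x p := by
  obtain ⟨q, hq, hpq⟩ := he
  obtain ⟨r, hr, hqr⟩ := hx q hq
  exact ⟨r, hr, hpq.trans hqr⟩

open scoped Classical in
variable (free) in
noncomputable def mult : (I →₀ ℕ) →+ (I → ℕ∞) where
  toFun x p := if Absorbs free x p then ⊤ else x p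
  map_zero' := by
    ext p
    simp [Absorbs]
  map_add' x y := by
    ext p
    simp only [Pi.add_apply, absorbs_add, Finsupp.add_apply, Nat.cast_add]
    split_ifs <;> simp_all

open scoped Classical in
theorem mult_apply (x : I →₀ ℕ) (p : I) :
    mult free x p = if Absorbs free x p then ⊤ else (x p : ℕ∞) := rfl

theorem mult_eq_top_iff {x : I →₀ ℕ} {p : I} : mult free x p = ⊤ ↔ Absorbs free x p := by
  rw [mult_apply]
  split_ifs with h <;> simp [h]

theorem mult_ne_zero_iff {x : I →₀ ℕ} {p : I} : mult free x p ≠ 0 ↔ ∃ q, p ≤ q ∧ x q ≠ 0 := by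
  rw [mult_apply]
  split_ifs with h
  · obtain ⟨q, hq, hpq⟩ := h
    simpa using ⟨q, hpq.le, hq⟩
  · refine ⟨fun hp => ⟨p, le_rfl, by exact_mod_cast hp⟩, ?_⟩
    rintro ⟨q, hpq, hq⟩
    rcases hpq.lt_or_eq with hpq | rfl
    exacts [(h ⟨q, hq, Or.inl hpq⟩).elim, by exact_mod_cast hq]

theorem mult_add_of_absorbs {x e : I →₀ ℕ} (he : ∀ p, e p ≠ 0 → Absorbs free x p) :
    mult free (x + e) = mult free x := by
  ext p
  rw [mult_apply, mult_apply]
  by_cases hx : Absorbs free x p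
  · rw [if_pos hx, if_pos (absorbs_add.2 (Or.inl hx))]
  · have hep : e p = 0 := by_contra fun h => hx (he p h)
    have hxe : ¬ Absorbs free (x + e) p := fun h =>
      (absorbs_add.1 h).elim hx fun h => hx (h.trans he)
    rw [if_neg hx, if_neg hxe, Finsupp.add_apply, hep, add_zero]

theorem triCon_le_ker_mult : triCon I free ≤ AddCon.ker (mult free) := by
  refine AddCon.addConGen_le.2 ?_
  rintro _ _ ⟨p, q, hpq, rfl, rfl⟩
  refine ((AddCon.ker_rel _).2 (mult_add_of_absorbs fun r hr => ?_)).symm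
  obtain ⟨rfl, -⟩ := Finsupp.single_apply_ne_zero.1 hr
  exact ⟨q, by simp, hpq⟩

theorem triCon_add_single_one {x : I →₀ ℕ} {p q : I} (hq : x q ≠ 0) (hpq : Lhd free p q) :
    triCon I free (x + Finsupp.single p 1) x := by
  obtain ⟨y, rfl⟩ : ∃ y, x = y + Finsupp.single q 1 :=
    ⟨x - Finsupp.single q 1,
      (tsub_add_cancel_of_le (Finsupp.single_le_iff.2 (Nat.one_le_iff_ne_zero.2 hq))).symm⟩
  have hrel : triCon I free (Finsupp.single q 1) (Finsupp.single q 1 + Finsupp.single p 1) :=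
    AddConGen.Rel.of _ _ ⟨p, q, hpq, rfl, rfl⟩
  have := ((triCon I free).refl y).add hrel
  rw [← add_assoc] at this
  exact (triCon I free).symm this

theorem triCon_add_single {x : I →₀ ℕ} {p q : I} (hq : x q ≠ 0) (hpq : Lhd free p q) (n : ℕ) :
    triCon I free (x + Finsupp.single p n) x := by
  induction n with
  | zero => simpa using (triCon I free).refl x
  | succ n ih =>
    have hq' : (x + Finsupp.single p n) q ≠ 0 := by simp [hq]
    rw [Finsupp.single_add, ← add_assoc]
    exact (triCon_add_single_one hq' hpq).trans ih

theorem triCon_add_of_absorbs {x e : I →₀ ℕ} (he : ∀ p, e p ≠ 0 → Absorbs free x p) :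
    triCon I free (x + e) x := by
  induction e using Finsupp.induction with
  | zero => simpa using (triCon I free).refl x
  | single_add p n e hp hn ih =>
    have hep : e p = 0 := Finsupp.notMem_support_iff.1 hp
    obtain ⟨q, hq, hpq⟩ := he p (by simp [hep, hn])
    have ih := ih fun r hr => he r (by
      rcases eq_or_ne p r with rfl | hpr
      · exact (hr hep).elim
      · simpa [Finsupp.single_apply, hpr] using hr)
    rw [add_comm (Finsupp.single p n), ← add_assoc]
    exact (triCon_add_single (by simp [hq]) hpq n).trans ih

theorem triCon_of_le_of_absorbs {m x : I →₀ ℕ} (hle : m ≤ x)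
    (habs : ∀ p, m p < x p → Absorbs free m p) : triCon I free x m := by
  have := triCon_add_of_absorbs (x := m) (e := x - m) fun p hp =>
    habs p (by rw [Finsupp.tsub_apply] at hp; omega)
  rwa [add_tsub_cancel_of_le hle] at this

theorem mult_eq_of_le_of_absorbs {m x : I →₀ ℕ} (hle : m ≤ x)
    (habs : ∀ p, m p < x p → Absorbs free m p) : mult free x = mult free m :=
  triCon_le_ker_mult (triCon_of_le_of_absorbs hle habs)

theorem absorbs_iff_of_mult_eq {x y : I →₀ ℕ} (h : mult free x = mult free y) (p : I) :
    Absorbs free x p ↔ Absorbs free y p := by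
  rw [← mult_eq_top_iff, ← mult_eq_top_iff, h]

theorem apply_eq_of_mult_eq {x y : I →₀ ℕ} (h : mult free x = mult free y) {p : I}
    (hp : ¬ Absorbs free x p) : x p = y p := by
  have := congrFun h p
  rw [mult_apply, mult_apply, if_neg hp, if_neg ((absorbs_iff_of_mult_eq h p).not.1 hp)] at this
  exact_mod_cast this

theorem ne_zero_of_mult_eq {x y : I →₀ ℕ} (h : mult free x = mult free y) {q : I}
    (hq : Maximal (· ∈ x.support) q) : y q ≠ 0 := by
  have hxq : mult free x q ≠ 0 := mult_ne_zero_iff.2 ⟨q, le_rfl, Finsupp.mem_support_iff.1 hq.1⟩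
  obtain ⟨r, hqr, hr⟩ := mult_ne_zero_iff.1 (h ▸ hxq)
  rcases hqr.lt_or_eq with hqr | rfl
  · have hyr : mult free y r ≠ 0 := mult_ne_zero_iff.2 ⟨r, le_rfl, hr⟩
    obtain ⟨s, hrs, hs⟩ := mult_ne_zero_iff.1 (h ▸ hyr)
    exact absurd (hq.2 (Finsupp.mem_support_iff.2 hs) (hqr.le.trans hrs))
      (hqr.trans_le hrs).not_ge
  · exact hr

theorem absorbs_inf_of_mult_eq {x y : I →₀ ℕ} (h : mult free x = mult free y) {p : I}
    (hp : y p < x p) : Absorbs free (x ⊓ y) p := by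
  have hx : Absorbs free x p := by_contra fun hx => hp.ne (apply_eq_of_mult_eq h hx).symm
  obtain ⟨q₀, hq₀, hpq₀⟩ := hx
  obtain ⟨q, hq₀q, hq⟩ := x.support.exists_le_maximal (Finsupp.mem_support_iff.2 hq₀)
  have hxq : x q ≠ 0 := Finsupp.mem_support_iff.1 hq.1
  have hyq : y q ≠ 0 := ne_zero_of_mult_eq h hq
  exact ⟨q, by simp [Finsupp.inf_apply, hxq, hyq], hpq₀.trans_le hq₀q⟩

theorem triCon_of_mult_eq {x y : I →₀ ℕ} (h : mult free x = mult free y) : triCon I free x y :=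
  have hx := triCon_of_le_of_absorbs inf_le_left fun p hp =>
    absorbs_inf_of_mult_eq h (by simpa [Finsupp.inf_apply] using hp)
  have hy := triCon_of_le_of_absorbs inf_le_right fun p hp => by
    rw [inf_comm]
    exact absorbs_inf_of_mult_eq h.symm (by simpa [Finsupp.inf_apply] using hp)
  hx.trans ((triCon I free).symm hy)

theorem triCon_iff {x y : I →₀ ℕ} : triCon I free x y ↔ mult free x = mult free y :=
  ⟨fun h => triCon_le_ker_mult h, triCon_of_mult_eq⟩

theorem mult_add_tsub_of_le {u w : I →₀ ℕ} (h : mult free u ≤ mult free w) :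
    mult free u + mult free (w - u) = mult free w := by
  ext p
  rw [Pi.add_apply, mult_apply w]
  split_ifs with hw
  · obtain ⟨q, hq, hpq⟩ := hw
    rcases Nat.eq_zero_or_pos (u q) with hu | hu
    · have : Absorbs free (w - u) p := ⟨q, by simp [Finsupp.tsub_apply, hu, hq], hpq⟩
      simp [mult_eq_top_iff.2 this]
    · have : Absorbs free u p := ⟨q, hu.ne', hpq⟩
      simp [mult_eq_top_iff.2 this]
  · have hup := h p
    rw [mult_apply w, if_neg hw, mult_apply] at hup
    have hu : ¬ Absorbs free u p := fun hu => by simp [hu] at hup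
    have hwu : ¬ Absorbs free (w - u) p := fun ⟨q, hq, hpq⟩ =>
      hw ⟨q, fun h => hq (by simp [Finsupp.tsub_apply, h]), hpq⟩
    rw [if_neg hu, Nat.cast_le] at hup
    rw [mult_apply, mult_apply, if_neg hu, if_neg hwu, Finsupp.tsub_apply, ← Nat.cast_add,
      add_tsub_cancel_of_le hup]

theorem exists_refinement {A B C D : I →₀ ℕ} (h : mult free (A + B) = mult free (C + D)) :
    ∃ w x y z : I →₀ ℕ, mult free (w + x) = mult free A ∧ mult free (y + z) = mult free B ∧
      mult free (w + y) = mult free C ∧ mult free (x + z) = mult free D := by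
  classical
  let ofLE (f : I → ℕ) (hf : ∀ p, f p ≤ (A + B + C + D) p) : I →₀ ℕ :=
    Finsupp.onFinset (A + B + C + D).support f fun p hp =>
      Finsupp.mem_support_iff.2 fun h0 => hp (by have := hf p; omega)
  /- Where `A + B` does not absorb `p`, refine `A p + B p = C p + D p` in `ℕ`. Where it does, put
  `A p` in column `C` if `C` absorbs `p` (else in column `D`), and `C p` in row `A` if `A` absorbs
  `p` (else in row `B`), and likewise for `B p` and `D p`: a row or column sum then exceeds its
  target only at a coordinate that the target absorbs. -/
  let w := ofLE (fun p => if Absorbs free (A + B) p then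
      (if Absorbs free C p then A p else 0) + (if Absorbs free A p then C p else 0)
    else min (A p) (C p)) fun p => by simp only [Finsupp.add_apply]; split_ifs <;> omega
  let x := ofLE (fun p => if Absorbs free (A + B) p then
      (if Absorbs free C p then 0 else A p) + (if Absorbs free A p then D p else 0)
    else A p - min (A p) (C p)) fun p => by simp only [Finsupp.add_apply]; split_ifs <;> omega
  let y := ofLE (fun p => if Absorbs free (A + B) p then
      (if Absorbs free C p then B p else 0) + (if Absorbs free A p then 0 else C p)
    else C p - min (A p) (C p)) fun p => by simp only [Finsupp.add_apply]; split_ifs <;> omega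
  let z := ofLE (fun p => if Absorbs free (A + B) p then
      (if Absorbs free C p then 0 else B p) + (if Absorbs free A p then 0 else D p)
    else min (B p) (D p)) fun p => by simp only [Finsupp.add_apply]; split_ifs <;> omega
  refine ⟨w, x, y, z, ?_, ?_, ?_, ?_⟩ <;>
    refine mult_eq_of_le_of_absorbs (fun p => ?_) (fun p => ?_)
  all_goals
    have hAB := absorbs_add (free := free) (x := A) (y := B) (p := p)
    have hCD := absorbs_add (free := free) (x := C) (y := D) (p := p)
    have hAC := absorbs_iff_of_mult_eq h p
    have hs : ¬ Absorbs free (A + B) p → (A + B) p = (C + D) p := apply_eq_of_mult_eq h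
    simp only [w, x, y, z, ofLE, Finsupp.add_apply, Finsupp.onFinset_apply]
    by_cases hp : Absorbs free (A + B) p <;>
      simp only [hp, not_true, not_false_eq_true, false_implies, true_implies, if_true,
        if_false, Finsupp.add_apply] at hs ⊢ <;>
      (try split_ifs) <;> first | omega | tauto

variable (I free) in
noncomputable def mk : (I →₀ ℕ) →+ MIdx I free := (triCon I free).mk'

theorem mk_surjective : Function.Surjective (mk I free) := AddCon.mk'_surjective

theorem mk_eq_mk_iff {x y : I →₀ ℕ} : mk I free x = mk I free y ↔ mult free x = mult free y :=
  (triCon I free).eq.trans triCon_iff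

variable (I free) in
noncomputable def toPi : MIdx I free →+ (I → ℕ∞) :=
  (triCon I free).lift (mult free) triCon_le_ker_mult

theorem toPi_mk (x : I →₀ ℕ) : toPi I free (mk I free x) = mult free x :=
  AddCon.lift_mk' _ x

theorem toPi_injective : Function.Injective (toPi I free) := by
  intro a b h
  obtain ⟨x, rfl⟩ := mk_surjective a
  obtain ⟨y, rfl⟩ := mk_surjective b
  rw [toPi_mk, toPi_mk] at h
  exact mk_eq_mk_iff.2 h

theorem mle_iff_toPi_le {a b : MIdx I free} : MLe a b ↔ toPi I free a ≤ toPi I free b := by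
  refine ⟨fun ⟨c, hc⟩ => hc ▸ (map_add (toPi I free) a c).symm ▸ le_self_add, fun h => ?_⟩
  obtain ⟨u, rfl⟩ := mk_surjective a
  obtain ⟨w, rfl⟩ := mk_surjective b
  rw [toPi_mk, toPi_mk] at h
  exact ⟨mk I free (w - u), toPi_injective (by
    rw [map_add, toPi_mk, toPi_mk, toPi_mk, mult_add_tsub_of_le h])⟩

theorem mle_antisymm {a b : MIdx I free} (hab : MLe a b) (hba : MLe b a) : a = b :=
  toPi_injective ((mle_iff_toPi_le.1 hab).antisymm (mle_iff_toPi_le.1 hba))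

theorem isRefinement : IsRefinement (MIdx I free) := by
  intro a b c d h
  obtain ⟨A, rfl⟩ := mk_surjective a
  obtain ⟨B, rfl⟩ := mk_surjective b
  obtain ⟨C, rfl⟩ := mk_surjective c
  obtain ⟨D, rfl⟩ := mk_surjective d
  rw [← map_add, ← map_add, mk_eq_mk_iff] at h
  obtain ⟨w, x, y, z, hA, hB, hC, hD⟩ := exists_refinement h
  refine ⟨mk I free w, mk I free x, mk I free y, mk I free z, ?_, ?_, ?_, ?_⟩ <;>
    rw [← map_add, mk_eq_mk_iff] <;> symm <;> assumption

theorem genI_eq_mk (p : I) : genI I free p = mk I free (Finsupp.single p 1) := rfl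

theorem mk_eq_sum (u : I →₀ ℕ) : mk I free u = u.sum fun q n => n • genI I free q := by
  conv_lhs => rw [← Finsupp.sum_single u]
  rw [map_finsuppSum]
  refine Finset.sum_congr rfl fun q _ => ?_
  dsimp only
  rw [← Finsupp.smul_single_one, map_nsmul, genI_eq_mk]

theorem closure_range_genI : AddSubmonoid.closure (Set.range (genI I free)) = ⊤ := by
  refine eq_top_iff.2 fun a _ => ?_
  obtain ⟨u, rfl⟩ := mk_surjective a
  rw [mk_eq_sum]
  exact AddSubmonoidClass.finsuppSum_mem _ _ _ fun q _ =>
    AddSubmonoid.nsmul_mem _ (AddSubmonoid.subset_closure (Set.mem_range_self q)) _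

theorem toPi_genI_self_ne_zero (p : I) : toPi I free (genI I free p) p ≠ 0 := by
  rw [genI_eq_mk, toPi_mk]
  exact mult_ne_zero_iff.2 ⟨p, le_rfl, by simp⟩

theorem genI_mle_iff {p : I} {a : MIdx I free} : MLe (genI I free p) a ↔ toPi I free a p ≠ 0 := by
  refine ⟨fun h => ?_, fun ha => ?_⟩
  · exact pos_iff_ne_zero.1 ((pos_iff_ne_zero.2 (toPi_genI_self_ne_zero p)).trans_le
      (mle_iff_toPi_le.1 h p))
  obtain ⟨u, rfl⟩ := mk_surjective a
  rw [toPi_mk] at ha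
  obtain ⟨q, hpq, hq⟩ := mult_ne_zero_iff.1 ha
  refine mle_iff_toPi_le.2 fun r => ?_
  rw [genI_eq_mk, toPi_mk, toPi_mk, mult_apply]
  split_ifs with hr
  · obtain ⟨p', hp', hrp'⟩ := hr
    obtain ⟨rfl, -⟩ := Finsupp.single_apply_ne_zero.1 hp'
    rw [mult_eq_top_iff.2 ⟨q, hq, hrp'.trans_le hpq⟩]
  · rcases eq_or_ne p r with rfl | hpr
    · simpa [Order.one_le_iff_ne_zero] using ha
    · simp [hpr]

theorem isPrimeElem_genI (p : I) : IsPrimeElem (genI I free p) := by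
  refine ⟨fun ⟨c, hc⟩ => toPi_genI_self_ne_zero (free := free) p ?_, fun a b h => ?_⟩
  · have := congrFun (congrArg (toPi I free) hc) p
    rw [map_add, Pi.add_apply, map_zero, Pi.zero_apply, add_eq_zero] at this
    exact this.1
  · rw [genI_mle_iff, map_add, Pi.add_apply, ne_eq, add_eq_zero, not_and_or] at h
    simpa only [genI_mle_iff] using h

theorem isPrimeElem_iff {a : MIdx I free} : IsPrimeElem a ↔ ∃ p, a = genI I free p := by
  refine ⟨fun ha => ?_, fun ⟨p, hp⟩ => hp ▸ isPrimeElem_genI p⟩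
  obtain ⟨u, rfl⟩ := mk_surjective a
  obtain ⟨q, hq, hle⟩ := ha.exists_mle_of_mle_sum (s := u.support)
    (f := fun q => u q • genI I free q) ⟨0, by rw [add_zero, mk_eq_sum, Finsupp.sum]⟩
  refine ⟨q, mle_antisymm (ha.mle_of_mle_nsmul hle) (genI_mle_iff.2 ?_)⟩
  rw [toPi_mk]
  exact mult_ne_zero_iff.2 ⟨q, le_rfl, Finsupp.mem_support_iff.1 hq⟩

theorem toPi_genI_self_of_free {p : I} (hp : free p) : toPi I free (genI I free p) p = 1 := by
  rw [genI_eq_mk, toPi_mk, mult_apply, if_neg]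
  · simp
  rintro ⟨q, hq, hpq⟩
  obtain ⟨rfl, -⟩ := Finsupp.single_apply_ne_zero.1 hq
  rcases hpq with h | ⟨-, h⟩
  exacts [lt_irrefl q h, h hp]

theorem le_of_nsmul_genI_mle {p : I} (hp : free p) {n m : ℕ}
    (h : MLe (n • genI I free p) (m • genI I free p)) : n ≤ m := by
  simpa [toPi_genI_self_of_free hp] using mle_iff_toPi_le.1 h p

theorem genI_add_genI_of_not_free {p : I} (hp : ¬ free p) :
    genI I free p + genI I free p = genI I free p := by
  rw [genI_eq_mk, ← map_add, mk_eq_mk_iff]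
  exact (triCon_le_ker_mult (AddConGen.Rel.of _ _ ⟨p, p, Or.inr ⟨rfl, hp⟩, rfl, rfl⟩)).symm

theorem genI_add_genI_mle_iff {p : I} :
    MLe (genI I free p + genI I free p) (genI I free p) ↔ ¬ free p := by
  refine ⟨fun h hp => ?_, fun hp => ⟨0, by rw [add_zero, genI_add_genI_of_not_free hp]⟩⟩
  have := le_of_nsmul_genI_mle hp (n := 2) (m := 1) (by rwa [two_nsmul, one_nsmul])
  omega

theorem forall_nsmul_genI_mle_iff {p : I} :
    (∀ n m : ℕ, 0 < n → 0 < m → MLe (n • genI I free p) (m • genI I free p) → n ≤ m) ↔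
      free p := by
  refine ⟨fun h => by_contra fun hp => ?_, fun hp n m _ _ => le_of_nsmul_genI_mle hp⟩
  have := h 2 1 two_pos one_pos (by rw [two_nsmul, one_nsmul]; exact genI_add_genI_mle_iff.2 hp)
  omega

end MIdx

/-- For a finite poset `I` with partition `I = I_free ⊔ I_reg`, the
monoid `M(I,◁)` is an antisymmetric finitely generated refinement monoid, its primes
are exactly the images of the elements of `I`, and `p ∈ I` is a regular prime iff
`p ∈ I_reg` and a free prime iff `p ∈ I_free`. -/
theorem stmt10 (I : Type) [PartialOrder I] [Finite I] (free : I → Prop) :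
    (∀ x y : MIdx I free, MLe x y → MLe y x → x = y) ∧
    (∃ S : Finset (MIdx I free), AddSubmonoid.closure (S : Set (MIdx I free)) = ⊤) ∧
    IsRefinement (MIdx I free) ∧
    (∀ x : MIdx I free, IsPrimeElem x ↔ ∃ p : I, x = genI I free p) ∧
    (∀ p : I, (MLe (genI I free p + genI I free p) (genI I free p) ↔ ¬ free p)) ∧
    (∀ p : I, (∀ n m : ℕ, 0 < n → 0 < m →
      MLe (n • genI I free p) (m • genI I free p) → n ≤ m) ↔ free p) :=
  ⟨fun _ _ => MIdx.mle_antisymm,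
    ⟨(Set.finite_range (genI I free)).toFinset, by
      rw [Set.Finite.coe_toFinset]
      exact MIdx.closure_range_genI⟩,
    MIdx.isRefinement, fun _ => MIdx.isPrimeElem_iff, fun _ => MIdx.genI_add_genI_mle_iff,
    fun _ => MIdx.forall_nsmul_genI_mle_iff⟩
end

section
/- Let (E,C) be an adaptable separated graph. Then every hereditary subset of E⁰ is C-saturated: if H ⊆ E⁰ satisfies r(e) ∈ H whenever s(e) ∈ H, then for every v ∈ E⁰ and X ∈ C_v with r(e) ∈ H for all e ∈ X, one has v ∈ H. -/
/-!
Every `X ∈ C_v` contains an edge whose range reaches back to `v`: the loop `α` if `v` is free,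
and otherwise, since `C_v = {X}` is then all of `s⁻¹(v)`, one of the two edges of `E_p` leaving
`v`. A hereditary set is closed under reachability, so it contains `v` as soon as it contains
`r(X)`.
-/

namespace SepGraph

variable {G : SepGraph}

theorem Reach.mem_of_hereditary {H : Set G.V} (hH : ∀ e : G.Ed, G.s e ∈ H → G.r e ∈ H)
    {u w : G.V} (huw : G.Reach u w) (hu : u ∈ H) : w ∈ H := by
  induction huw with
  | refl => exact hu
  | tail _ hedge ih =>
    obtain ⟨e, rfl, rfl⟩ := hedge
    exact hH e ih

namespace AdaptableStructure

theorem mem_of_not_free (A : G.AdaptableStructure) {v : G.V} (hv : ¬ A.free v) {X : Finset G.Ed} (hX : X ∈ G.C v)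
    {e : G.Ed} (he : G.s e = v) : e ∈ X := by
  obtain ⟨Y, hY, heY⟩ := G.c_cover e
  obtain ⟨X₀, -, hunique⟩ := A.reg_unique_C v hv
  rw [he] at hY
  rwa [(hunique Y hY).trans (hunique X hX).symm] at heY

theorem exists_mem_reach_of_mem_C (A : G.AdaptableStructure) {v : G.V} {X : Finset G.Ed} (hX : X ∈ G.C v) :
    ∃ e ∈ X, G.Reach (G.r e) v := by
  by_cases hv : A.free v
  · obtain ⟨e, ⟨he, hloop⟩, -⟩ := A.free_loop v hv X hX
    exact ⟨e, he, hloop ▸ Relation.ReflTransGen.refl⟩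
  · obtain ⟨e, -, -, hs, -, hequiv, -⟩ := A.reg_two_edges v hv
    exact ⟨e, A.mem_of_not_free hv hX hs, hequiv.1⟩

end AdaptableStructure

end SepGraph

/-- In an adaptable separated graph, every hereditary subset of
`E⁰` is `C`-saturated. -/
theorem stmt11 (G : SepGraph) (A : G.AdaptableStructure) (H : Set G.V)
    (hH : ∀ e : G.Ed, G.s e ∈ H → G.r e ∈ H)
    (v : G.V) (X : Finset G.Ed) (hX : X ∈ G.C v) (hXH : ∀ e ∈ X, G.r e ∈ H) :
    v ∈ H := by
  obtain ⟨e, he, hreach⟩ := A.exists_mem_reach_of_mem_C hX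
  exact hreach.mem_of_hereditary hH (hXH e he)
end
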